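/- If every value f(S) for S ⊆ A and every cost c(a) for a ∈ A is an integer multiple of 2^{−k}, then every critical value is a ratio of two k-bit integers: C_{f,c} ⊆ Q, where Q = {a/b : a, b ∈ {1, 2, …, 2^k}}. -/
import Mathlib


open Finset

/-- The agent's demand at contract `α`: sets maximizing `α·f(S) − c(S)`. -/
def Demand (n : ℕ) (f : Finset (Fin n) → ℝ) (c : Fin n → ℝ) (α : ℝ) :
    Set (Finset (Fin n)) :=
  {S | ∀ T : Finset (Fin n), α * f T - ∑ a ∈ T, c a ≤ α * f S - ∑ a ∈ S, c a}

/-- `V_{f,c}(α)`: the maximal value of `f` over the demand at `α`. -/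
noncomputable def Vfc (n : ℕ) (f : Finset (Fin n) → ℝ) (c : Fin n → ℝ) (α : ℝ) : ℝ :=
  sSup (f '' Demand n f c α)

/-- The critical set `C_{f,c}`. -/
def Critical (n : ℕ) (f : Finset (Fin n) → ℝ) (c : Fin n → ℝ) : Set ℝ :=
  {α | 0 < α ∧ α ≤ 1 ∧
    ∀ ε : ℝ, 0 < ε → ε ≤ α → Vfc n f c (α - ε) ≠ Vfc n f c α}

/-- Auxiliary: the agent's utility. -/
def util (n : ℕ) (f : Finset (Fin n) → ℝ) (c : Fin n → ℝ) (β : ℝ) (S : Finset (Fin n)) : ℝ :=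
  β * f S - ∑ a ∈ S, c a

lemma demand_nonempty (n : ℕ) (f : Finset (Fin n) → ℝ) (c : Fin n → ℝ) (β : ℝ) :
    (Demand n f c β).Nonempty := by
  obtain ⟨S, -, hS⟩ := Finset.exists_max_image (Finset.univ)
    (fun S : Finset (Fin n) => β * f S - ∑ a ∈ S, c a) ⟨∅, Finset.mem_univ _⟩
  exact ⟨S, fun T => hS T (Finset.mem_univ T)⟩

lemma Vfc_mem (n : ℕ) (f : Finset (Fin n) → ℝ) (c : Fin n → ℝ) (β : ℝ) :
    Vfc n f c β ∈ f '' Demand n f c β :=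
  Set.Nonempty.csSup_mem ((demand_nonempty n f c β).image f) (Set.toFinite _)

lemma le_Vfc (n : ℕ) (f : Finset (Fin n) → ℝ) (c : Fin n → ℝ) (β : ℝ)
    {S : Finset (Fin n)} (hS : S ∈ Demand n f c β) : f S ≤ Vfc n f c β :=
  le_csSup (Set.Finite.bddAbove (Set.toFinite _)) ⟨S, hS, rfl⟩

lemma cost_dyadic (n k : ℕ) (c : Fin n → ℝ)
    (hck : ∀ a : Fin n, ∃ m : ℤ, c a = (m : ℝ) / 2 ^ k) (S : Finset (Fin n)) :
    ∃ m : ℤ, ∑ a ∈ S, c a = (m : ℝ) / 2 ^ k := by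
  choose m hm using hck
  refine ⟨∑ a ∈ S, m a, ?_⟩
  rw [Finset.sum_congr rfl (fun a _ => hm a)]
  push_cast
  rw [Finset.sum_div]

/-- If all values of `f` and `c` are integer multiples of `2^{-k}`, then every critical
value is a ratio `a/b` of two integers `a, b ∈ {1, …, 2^k}`. -/
theorem critical_values_are_kbit_ratios (n k : ℕ) (f : Finset (Fin n) → ℝ) (c : Fin n → ℝ)
    (hf0 : f ∅ = 0) (hmono : ∀ S T : Finset (Fin n), S ⊆ T → f S ≤ f T)
    (hf01 : ∀ S : Finset (Fin n), 0 ≤ f S ∧ f S ≤ 1) (hc : ∀ a : Fin n, 0 < c a)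
    (hfk : ∀ S : Finset (Fin n), ∃ m : ℤ, f S = (m : ℝ) / 2 ^ k)
    (hck : ∀ a : Fin n, ∃ m : ℤ, c a = (m : ℝ) / 2 ^ k) :
    Critical n f c ⊆
      {x : ℝ | ∃ a b : ℕ, 1 ≤ a ∧ a ≤ 2 ^ k ∧ 1 ≤ b ∧ b ≤ 2 ^ k ∧ x = (a : ℝ) / b} := by
  classical
  intro α hαmem
  obtain ⟨hα0, hα1, hcrit⟩ := hαmem
  have hu : ∀ (β : ℝ) (S : Finset (Fin n)), util n f c β S = β * f S - ∑ a ∈ S, c a :=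
    fun _ _ => rfl
  set D := Demand n f c α with hD
  -- the maximal-value set S in the demand
  obtain ⟨S, hSD, hfS⟩ := Vfc_mem n f c α
  -- the minimal-value set T in the demand
  obtain ⟨T, hTD, hTmin⟩ := Set.exists_min_image D f (Set.toFinite _) (demand_nonempty n f c α)
  have hM : ∀ S' ∈ D, util n f c α S' = util n f c α S := fun S' hS' => le_antisymm (hSD S') (hS' S)
  -- pick ε > 0 smaller than every gap
  set g : Finset (Fin n) → ℝ := fun S' => if S' ∈ D then 1 else (util n f c α S - util n f c α S') / 2 with hg
  have hgpos : ∀ S', 0 < g S' := by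
    intro S'
    by_cases h : S' ∈ D
    · simp [hg, h]
    · have : ¬ ∀ T', util n f c α T' ≤ util n f c α S' := h
      push_neg at this
      obtain ⟨T', hT'⟩ := this
      have : util n f c α S' < util n f c α S := lt_of_lt_of_le hT' (hSD T')
      simp only [hg, h, if_false]
      have h4 : 0 < util n f c α S - util n f c α S' := by linarith
      linarith
  obtain ⟨S₁, -, hS₁⟩ := Finset.exists_min_image (Finset.univ) g ⟨∅, Finset.mem_univ _⟩
  set ε := min α (g S₁) with hε
  have hε0 : 0 < ε := lt_min hα0 (hgpos S₁)
  have hεα : ε ≤ α := min_le_left _ _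
  have hεg : ∀ S', ε ≤ g S' := fun S' => le_trans (min_le_right _ _) (hS₁ S' (Finset.mem_univ _))
  -- T is in the demand at α - ε, beating non-members of D strictly
  have hub : ∀ S', util n f c (α - ε) S' ≤ util n f c (α - ε) T ∧ (S' ∉ D → util n f c (α - ε) S' < util n f c (α - ε) T) := by
    intro S'
    have hexp : ∀ W : Finset (Fin n), util n f c (α - ε) W = util n f c α W - ε * f W := by
      intro W; simp only [hu]; ring
    have hfT1 : f T ≤ 1 := (hf01 T).2
    have hfS'0 : 0 ≤ f S' := (hf01 S').1
    by_cases h : S' ∈ D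
    · have h1 : util n f c α S' = util n f c α S := hM S' h
      have h2 : util n f c α T = util n f c α S := hM T hTD
      have h3 : f T ≤ f S' := hTmin S' h
      constructor
      · rw [hexp, hexp, h1, h2]; nlinarith
      · intro h'; exact absurd h h'.elim
    · have hgap : ε ≤ (util n f c α S - util n f c α S') / 2 := by
        have := hεg S'; simpa [hg, h] using this
      have h2 : util n f c α T = util n f c α S := hM T hTD
      have hlt : util n f c (α - ε) S' < util n f c (α - ε) T := by
        rw [hexp, hexp, h2]
        have p1 : ε * f T ≤ ε := by nlinarith
        have p2 : 0 ≤ ε * f S' := mul_nonneg (le_of_lt hε0) hfS'0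
        linarith
      exact ⟨le_of_lt hlt, fun _ => hlt⟩
  have hTD' : T ∈ Demand n f c (α - ε) := fun S' => (hub S').1
  -- every member of demand at α - ε has f-value ≤ f T
  have hVsmall : Vfc n f c (α - ε) = f T := by
    apply le_antisymm
    · apply csSup_le ((demand_nonempty n f c (α - ε)).image f)
      rintro x ⟨S', hS', rfl⟩
      by_cases h : S' ∈ D
      · -- u (α-ε) S' ≥ u (α-ε) T forces f S' ≤ f T
        have h1 : util n f c (α - ε) T ≤ util n f c (α - ε) S' := hS' T
        have h2 : util n f c α S' = util n f c α T := (hM S' h).trans (hM T hTD).symm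
        have hexp : ∀ W : Finset (Fin n), util n f c (α - ε) W = util n f c α W - ε * f W := by
          intro W; simp only [hu]; ring
        rw [hexp, hexp, h2] at h1
        nlinarith
      · exact absurd (hS' T) (not_le.mpr ((hub S').2 h))
    · exact le_Vfc n f c (α - ε) hTD'
  -- criticality forces f T < f S
  have hne := hcrit ε hε0 hεα
  rw [hVsmall, ← hfS] at hne
  have hfTle : f T ≤ f S := hTmin S hSD
  have hfTlt : f T < f S := lt_of_le_of_ne hfTle hne
  -- equal utilities give α * (f S - f T) = cost S - cost T
  have hequ : util n f c α S = util n f c α T := (hM S hSD).trans (hM T hTD).symm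
  have hkey : α * (f S - f T) = (∑ a ∈ S, c a) - (∑ a ∈ T, c a) := by
    simp only [hu] at hequ; linarith
  -- dyadic representations
  obtain ⟨mS, hmS⟩ := hfk S
  obtain ⟨mT, hmT⟩ := hfk T
  obtain ⟨pS, hpS⟩ := cost_dyadic n k c hck S
  obtain ⟨pT, hpT⟩ := cost_dyadic n k c hck T
  have h2k : (0:ℝ) < 2 ^ k := by positivity
  set b : ℤ := mS - mT with hb
  set a : ℤ := pS - pT with ha
  have hfdiff : f S - f T = (b : ℝ) / 2 ^ k := by
    rw [hmS, hmT, hb]; push_cast; ring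
  have hcdiff : (∑ x ∈ S, c x) - (∑ x ∈ T, c x) = (a : ℝ) / 2 ^ k := by
    rw [hpS, hpT, ha]; push_cast; ring
  have hfdpos : 0 < f S - f T := by linarith
  have hfdle : f S - f T ≤ 1 := by
    have := (hf01 S).2; have := (hf01 T).1; linarith
  have hcdpos : 0 < (∑ x ∈ S, c x) - (∑ x ∈ T, c x) := by
    rw [← hkey]; positivity
  have hcdle : (∑ x ∈ S, c x) - (∑ x ∈ T, c x) ≤ 1 := by
    rw [← hkey]; nlinarith
  have hbR : (b : ℝ) = (f S - f T) * 2 ^ k := by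
    rw [hfdiff]; field_simp
  have haR : (a : ℝ) = ((∑ x ∈ S, c x) - (∑ x ∈ T, c x)) * 2 ^ k := by
    rw [hcdiff]; field_simp
  have h2kR : ((2:ℝ)) ^ k = ((2 ^ k : ℕ) : ℝ) := by push_cast; ring
  have hb1 : 1 ≤ b := by
    have : (0:ℝ) < (b:ℝ) := by rw [hbR]; positivity
    have h0 : (0:ℤ) < b := by exact_mod_cast this
    omega
  have hbk : b ≤ (2 ^ k : ℕ) := by
    have : (b:ℝ) ≤ ((2 ^ k : ℕ) : ℝ) := by
      rw [hbR, ← h2kR]; nlinarith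
    exact_mod_cast this
  have ha1 : 1 ≤ a := by
    have : (0:ℝ) < (a:ℝ) := by rw [haR]; positivity
    have h0 : (0:ℤ) < a := by exact_mod_cast this
    omega
  have hak : a ≤ (2 ^ k : ℕ) := by
    have : (a:ℝ) ≤ ((2 ^ k : ℕ) : ℝ) := by
      rw [haR, ← h2kR]; nlinarith
    exact_mod_cast this
  refine ⟨a.toNat, b.toNat, ?_, ?_, ?_, ?_, ?_⟩
  · omega
  · omega
  · omega
  · omega
  · have hta : ((a.toNat : ℕ) : ℝ) = (a : ℝ) := by exact_mod_cast Int.toNat_of_nonneg (by omega)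
    have htb : ((b.toNat : ℕ) : ℝ) = (b : ℝ) := by exact_mod_cast Int.toNat_of_nonneg (by omega)
    rw [hta, htb]
    have hbpos : (0:ℝ) < (b:ℝ) := by exact_mod_cast (show (0:ℤ) < b by omega)
    have hmain : α * ((b:ℝ) / 2 ^ k) = (a:ℝ) / 2 ^ k := by rw [← hfdiff, ← hcdiff]; exact hkey
    rw [eq_div_iff (ne_of_gt hbpos)]
    have h2k' : (2:ℝ) ^ k ≠ 0 := ne_of_gt h2k
    field_simp at hmain
    linarith
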